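/- Let T, U, V, W₁, W₂, Y₁, Y₂ be random variables on a common probability space taking values in finite sets. If I(U;Y₁|(T,W₁)) = I(U;Y₁|W₁), I(W₂;Y₁|(T,U,W₁)) = I(W₁;Y₂|(T,U,W₂)), and I(V;Y₂|(T,U,W₂)) = I(V;Y₂|W₂), then I(T;Y₁|W₁) + I(U;Y₁|W₁) + I(V;Y₂|W₂) ≤ I(V;Y₂|(T,U,W₁,W₂)) + I((T,W₁,W₂);Y₁) + I(U;Y₁|(T,W₁,W₂)). -/

import Mathlib

open MeasureTheory Real

/-- Shannon entropy (in nats) of a random variable taking values in a finite set. -/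
noncomputable def entropy {Ω : Type*} [MeasurableSpace Ω] (μ : Measure Ω)
    {S : Type*} [Fintype S] (X : Ω → S) : ℝ :=
  ∑ x : S, Real.negMulLog (μ (X ⁻¹' {x})).toReal

/-- Mutual information `I(X;Y) = H(X) + H(Y) - H(X,Y)`. -/
noncomputable def mutualInfo {Ω : Type*} [MeasurableSpace Ω] (μ : Measure Ω)
    {S T : Type*} [Fintype S] [Fintype T] (X : Ω → S) (Y : Ω → T) : ℝ :=
  entropy μ X + entropy μ Y - entropy μ (fun ω => (X ω, Y ω))

/-- Conditional mutual information `I(X;Y|Z) = H(X,Z) + H(Y,Z) - H(X,Y,Z) - H(Z)`. -/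
noncomputable def condMutualInfo {Ω : Type*} [MeasurableSpace Ω] (μ : Measure Ω)
    {S T R : Type*} [Fintype S] [Fintype T] [Fintype R]
    (X : Ω → S) (Y : Ω → T) (Z : Ω → R) : ℝ :=
  entropy μ (fun ω => (X ω, Z ω)) + entropy μ (fun ω => (Y ω, Z ω))
    - entropy μ (fun ω => (X ω, Y ω, Z ω)) - entropy μ Z


/-!
By the chain rule, `I(T,W₁,W₂;Y₁) = I(W₁;Y₁) + I(T;Y₁|W₁) + I(W₂;Y₁|T,W₁)`, and by the exchange
identity `I(A;Y|Z) + I(B;Y|A,Z) = I(B;Y|Z) + I(A;Y|B,Z)` (two chain rules for `I(A,B;Y|Z)`),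
applied to `U, W₂` given `T, W₁` and to `V, W₁` given `T, U, W₂`, the three hypotheses turn the
right-hand side minus the left-hand side into `I(W₁;Y₁) + I(W₁;Y₂|T,U,V,W₂)`.
Both terms are nonnegative: fibrewise over the conditioning variable this is Gibbs' inequality,
obtained by summing `log t ≤ t - 1` at `t = p(x,z) p(y,z) / (p(x,y,z) p(z))`.
-/

lemma mul_log_add_mul_log_sub_le {p a b q : ℝ} (hp : 0 ≤ p) (ha : p ≤ a) (hb : p ≤ b)
    (hq : p ≤ q) : p * log a + p * log b - p * log p - p * log q ≤ a * b / q - p := by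
  rcases hp.eq_or_lt with rfl | hp
  · have hab : 0 ≤ a * b / q := by positivity
    simpa using hab
  have ha := hp.trans_le ha
  have hb := hp.trans_le hb
  have hq := hp.trans_le hq
  have key := mul_le_mul_of_nonneg_left (log_le_sub_one_of_pos
    (show 0 < a * b / (p * q) by positivity)) hp.le
  rw [log_div (by positivity) (by positivity), log_mul ha.ne' hb.ne', log_mul hp.ne' hq.ne'] at key
  have hpq : p * (a * b / (p * q)) = a * b / q := by field_simp
  linarith

lemma sum_sum_negMulLog_add_negMulLog_sum_le {S T : Type*} [Fintype S] [Fintype T]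
    (p : S → T → ℝ) (hp : ∀ x y, 0 ≤ p x y) :
    ∑ x, ∑ y, negMulLog (p x y) + negMulLog (∑ x, ∑ y, p x y) ≤
      ∑ x, negMulLog (∑ y, p x y) + ∑ y, negMulLog (∑ x, p x y) := by
  set a := fun x => ∑ y, p x y
  set b := fun y => ∑ x, p x y
  set q := ∑ x, ∑ y, p x y
  have hpa : ∀ x y, p x y ≤ a x := fun x y =>
    Finset.single_le_sum (fun y _ => hp x y) (Finset.mem_univ y)
  have hpb : ∀ x y, p x y ≤ b y := fun x y =>
    Finset.single_le_sum (fun x _ => hp x y) (Finset.mem_univ x)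
  have haq : ∀ x, a x ≤ q := fun x =>
    Finset.single_le_sum (fun x _ => Finset.sum_nonneg fun y _ => hp x y) (Finset.mem_univ x)
  have hsum : ∑ x, ∑ y, (a x * b y / q - p x y) = 0 := by
    simp only [Finset.sum_sub_distrib, ← Finset.sum_div, ← Finset.mul_sum, ← Finset.sum_mul]
    rw [show ∑ y, b y = q from Finset.sum_comm]
    change q * q / q - q = 0
    rcases eq_or_ne q 0 with hq | hq <;> simp [hq]
  have hle := Finset.sum_le_sum fun x (_ : x ∈ Finset.univ) =>
    Finset.sum_le_sum fun y (_ : y ∈ Finset.univ) =>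
      mul_log_add_mul_log_sub_le (hp x y) (hpa x y) (hpb x y) ((hpa x y).trans (haq x))
  rw [hsum] at hle
  simp only [Finset.sum_sub_distrib, Finset.sum_add_distrib, ← Finset.sum_mul] at hle
  rw [Finset.sum_comm (f := fun x y => p x y * log (b y))] at hle
  simp only [← Finset.sum_mul, negMulLog, neg_mul, Finset.sum_neg_distrib] at hle ⊢
  linarith

lemma Set.preimage_prodMk_singleton {α S T : Type*} (X : α → S) (Y : α → T) (x : S) (y : T) :
    (fun a => (X a, Y a)) ⁻¹' {(x, y)} = X ⁻¹' {x} ∩ Y ⁻¹' {y} := by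
  rw [← Set.singleton_prod_singleton, Set.mk_preimage_prod]

section Measure

variable {Ω : Type*} [MeasurableSpace Ω] (μ : Measure Ω)

lemma entropy_eq_sum_measureReal {S : Type*} [Fintype S] (X : Ω → S) :
    entropy μ X = ∑ x, negMulLog (μ.real (X ⁻¹' {x})) :=
  rfl

lemma entropy_prodMk {S T : Type*} [Fintype S] [Fintype T] (X : Ω → S) (Y : Ω → T) :
    entropy μ (fun ω => (X ω, Y ω)) = ∑ x, ∑ y, negMulLog (μ.real (X ⁻¹' {x} ∩ Y ⁻¹' {y})) := by
  simp only [entropy_eq_sum_measureReal, Fintype.sum_prod_type, Set.preimage_prodMk_singleton]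

lemma entropy_comp_of_injective {S T : Type*} [Fintype S] [Fintype T] {f : S → T}
    (hf : Function.Injective f) (X : Ω → S) :
    entropy μ (fun ω => f (X ω)) = entropy μ X := by
  rw [entropy_eq_sum_measureReal, entropy_eq_sum_measureReal]
  refine (Fintype.sum_of_injective f hf _ _ (fun t ht => ?_) fun x => ?_).symm
  · have : (fun ω => f (X ω)) ⁻¹' {t} = ∅ :=
      Set.eq_empty_of_forall_notMem fun ω hω => ht ⟨X ω, hω⟩
    rw [this, measureReal_empty, negMulLog_zero]
  · simp only [Set.preimage, Set.mem_singleton_iff, hf.eq_iff]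

lemma sum_measureReal_inter_preimage_singleton [IsFiniteMeasure μ] {S : Type*} [Fintype S]
    [MeasurableSpace S] [MeasurableSingletonClass S] {X : Ω → S} (hX : Measurable X)
    (A : Set Ω) :
    ∑ x, μ.real (A ∩ X ⁻¹' {x}) = μ.real A := by
  have := sum_measureReal_preimage_singleton (μ := μ.restrict A) Finset.univ
    (fun x _ => hX (measurableSet_singleton x))
  simpa [measureReal_restrict_apply (hX (measurableSet_singleton _)), Set.inter_comm] using this

lemma sum_measureReal_preimage_singleton_inter [IsFiniteMeasure μ] {S : Type*} [Fintype S]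
    [MeasurableSpace S] [MeasurableSingletonClass S] {X : Ω → S} (hX : Measurable X)
    (A : Set Ω) :
    ∑ x, μ.real (X ⁻¹' {x} ∩ A) = μ.real A := by
  simpa only [Set.inter_comm A] using sum_measureReal_inter_preimage_singleton μ hX A

variable {S T R : Type*} [Fintype S] [MeasurableSpace S] [MeasurableSingletonClass S]
  [Fintype T] [MeasurableSpace T] [MeasurableSingletonClass T] [Fintype R]
  {X : Ω → S} {Y : Ω → T}

lemma mutualInfo_nonneg [IsProbabilityMeasure μ] (hX : Measurable X) (hY : Measurable Y) :
    0 ≤ mutualInfo μ X Y := by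
  have key := sum_sum_negMulLog_add_negMulLog_sum_le
    (fun x y => μ.real (X ⁻¹' {x} ∩ Y ⁻¹' {y})) fun _ _ => measureReal_nonneg
  have htotal : ∑ x, μ.real (X ⁻¹' {x}) = 1 := by
    simpa using sum_measureReal_inter_preimage_singleton μ hX Set.univ
  simp only [sum_measureReal_inter_preimage_singleton μ hY,
    sum_measureReal_preimage_singleton_inter μ hX, htotal, negMulLog_one] at key
  rw [mutualInfo, entropy_prodMk, entropy_eq_sum_measureReal, entropy_eq_sum_measureReal]
  linarith

lemma condMutualInfo_nonneg [IsFiniteMeasure μ] (hX : Measurable X) (hY : Measurable Y)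
    (Z : Ω → R) :
    0 ≤ condMutualInfo μ X Y Z := by
  have hXZ : ∀ x z, ∑ y, μ.real (X ⁻¹' {x} ∩ (Y ⁻¹' {y} ∩ Z ⁻¹' {z})) =
      μ.real (X ⁻¹' {x} ∩ Z ⁻¹' {z}) := fun x z => by
    simp only [Set.inter_left_comm (X ⁻¹' _), sum_measureReal_preimage_singleton_inter μ hY]
  have hYZ : ∀ y z, ∑ x, μ.real (X ⁻¹' {x} ∩ (Y ⁻¹' {y} ∩ Z ⁻¹' {z})) =
      μ.real (Y ⁻¹' {y} ∩ Z ⁻¹' {z}) := fun y z =>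
    sum_measureReal_preimage_singleton_inter μ hX _
  have key := Finset.sum_le_sum fun z (_ : z ∈ Finset.univ) =>
    sum_sum_negMulLog_add_negMulLog_sum_le
      (fun x y => μ.real (X ⁻¹' {x} ∩ (Y ⁻¹' {y} ∩ Z ⁻¹' {z}))) fun _ _ => measureReal_nonneg
  simp only [hXZ, hYZ, sum_measureReal_preimage_singleton_inter μ hX,
    Finset.sum_add_distrib] at key
  simp only [condMutualInfo, entropy_eq_sum_measureReal, Fintype.sum_prod_type,
    Set.preimage_prodMk_singleton]
  rw [Finset.sum_comm (γ := R)] at key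
  have hswap : ∀ x, ∑ z, ∑ y, negMulLog (μ.real (X ⁻¹' {x} ∩ (Y ⁻¹' {y} ∩ Z ⁻¹' {z}))) =
      ∑ y, ∑ z, negMulLog (μ.real (X ⁻¹' {x} ∩ (Y ⁻¹' {y} ∩ Z ⁻¹' {z}))) :=
    fun _ => Finset.sum_comm
  rw [Finset.sum_congr rfl fun x _ => hswap x, Finset.sum_comm (γ := R) (α := S),
    Finset.sum_comm (γ := R) (α := T)] at key
  linarith

end Measure

section Identities

variable {Ω : Type*} [MeasurableSpace Ω] (μ : Measure Ω)
  {S S' T R Q : Type*} [Fintype S] [Fintype S'] [Fintype T] [Fintype R] [Fintype Q]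

lemma mutualInfo_comp_left {f : S → S'} (hf : Function.Injective f) (X : Ω → S) (Y : Ω → T) :
    mutualInfo μ (fun ω => f (X ω)) Y = mutualInfo μ X Y := by
  erw [mutualInfo, mutualInfo, entropy_comp_of_injective μ hf,
    entropy_comp_of_injective μ (hf.prodMap Function.injective_id) (fun ω => (X ω, Y ω))]

lemma condMutualInfo_comp_left {f : S → S'} (hf : Function.Injective f) (X : Ω → S) (Y : Ω → T)
    (Z : Ω → R) : condMutualInfo μ (fun ω => f (X ω)) Y Z = condMutualInfo μ X Y Z := by
  erw [condMutualInfo, condMutualInfo,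
    entropy_comp_of_injective μ (hf.prodMap Function.injective_id) (fun ω => (X ω, Z ω)),
    entropy_comp_of_injective μ (hf.prodMap Function.injective_id) (fun ω => (X ω, Y ω, Z ω))]

lemma condMutualInfo_comp_cond {f : R → S'} (hf : Function.Injective f) (X : Ω → S) (Y : Ω → T)
    (Z : Ω → R) : condMutualInfo μ X Y (fun ω => f (Z ω)) = condMutualInfo μ X Y Z := by
  erw [condMutualInfo, condMutualInfo, entropy_comp_of_injective μ hf,
    entropy_comp_of_injective μ (Function.injective_id.prodMap hf) (fun ω => (X ω, Z ω)),
    entropy_comp_of_injective μ (Function.injective_id.prodMap hf) (fun ω => (Y ω, Z ω)),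
    entropy_comp_of_injective μ (Function.injective_id.prodMap (Function.injective_id.prodMap hf))
      (fun ω => (X ω, Y ω, Z ω))]

lemma mutualInfo_prodMk_left (X : Ω → S) (Y : Ω → T) (Z : Ω → R) :
    mutualInfo μ (fun ω => (X ω, Y ω)) Z = mutualInfo μ X Z + condMutualInfo μ Y Z X := by
  have hYX : entropy μ (fun ω => (Y ω, X ω)) = entropy μ (fun ω => (X ω, Y ω)) :=
    entropy_comp_of_injective μ Prod.swap_injective fun ω => (X ω, Y ω)
  have hZX : entropy μ (fun ω => (Z ω, X ω)) = entropy μ (fun ω => (X ω, Z ω)) :=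
    entropy_comp_of_injective μ Prod.swap_injective fun ω => (X ω, Z ω)
  have hYZX : entropy μ (fun ω => (Y ω, Z ω, X ω)) = entropy μ (fun ω => ((X ω, Y ω), Z ω)) :=
    entropy_comp_of_injective μ (f := fun p : (S × T) × R => (p.1.2, p.2, p.1.1))
      (fun _ _ h => by simp_all [Prod.ext_iff]) fun ω => ((X ω, Y ω), Z ω)
  simp only [mutualInfo, condMutualInfo, hYX, hZX, hYZX]
  ring

lemma condMutualInfo_prodMk_left (X : Ω → S) (Y : Ω → T) (Z : Ω → R) (W : Ω → Q) :
    condMutualInfo μ (fun ω => (X ω, Y ω)) Z W =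
      condMutualInfo μ X Z W + condMutualInfo μ Y Z (fun ω => (X ω, W ω)) := by
  have hYXW : entropy μ (fun ω => (Y ω, X ω, W ω)) = entropy μ (fun ω => ((X ω, Y ω), W ω)) :=
    entropy_comp_of_injective μ (f := fun p : (S × T) × Q => (p.1.2, p.1.1, p.2))
      (fun _ _ h => by simp_all [Prod.ext_iff]) fun ω => ((X ω, Y ω), W ω)
  have hZXW : entropy μ (fun ω => (Z ω, X ω, W ω)) = entropy μ (fun ω => (X ω, Z ω, W ω)) :=
    entropy_comp_of_injective μ (f := fun p : S × R × Q => (p.2.1, p.1, p.2.2))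
      (fun _ _ h => by simp_all [Prod.ext_iff]) fun ω => (X ω, Z ω, W ω)
  have hYZXW : entropy μ (fun ω => (Y ω, Z ω, X ω, W ω)) =
      entropy μ (fun ω => ((X ω, Y ω), Z ω, W ω)) :=
    entropy_comp_of_injective μ (f := fun p : (S × T) × R × Q => (p.1.2, p.2.1, p.1.1, p.2.2))
      (fun _ _ h => by simp_all [Prod.ext_iff]) fun ω => ((X ω, Y ω), Z ω, W ω)
  simp only [condMutualInfo, hYXW, hZXW, hYZXW]
  ring

lemma condMutualInfo_add_condMutualInfo_comm (X : Ω → S) (Y : Ω → T) (Z : Ω → R) (W : Ω → Q) :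
    condMutualInfo μ X Z W + condMutualInfo μ Y Z (fun ω => (X ω, W ω)) =
      condMutualInfo μ Y Z W + condMutualInfo μ X Z (fun ω => (Y ω, W ω)) := by
  rw [← condMutualInfo_prodMk_left, ← condMutualInfo_prodMk_left]
  exact (condMutualInfo_comp_left μ Prod.swap_injective (fun ω => (X ω, Y ω)) Z W).symm

end Identities

theorem stmt_13_general
    {Ω : Type*} [MeasurableSpace Ω] (μ : Measure Ω) [IsProbabilityMeasure μ]
    {ST SU SV SW₁ SW₂ SY₁ SY₂ : Type*}
    [Fintype ST] [Fintype SU] [Fintype SV] [Fintype SW₁] [MeasurableSpace SW₁] [MeasurableSingletonClass SW₁] [Fintype SW₂] [Fintype SY₁] [MeasurableSpace SY₁] [MeasurableSingletonClass SY₁] [Fintype SY₂] [MeasurableSpace SY₂] [MeasurableSingletonClass SY₂]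
    (T : Ω → ST) (U : Ω → SU) (V : Ω → SV) (W₁ : Ω → SW₁) (W₂ : Ω → SW₂) (Y₁ : Ω → SY₁) (Y₂ : Ω → SY₂)
    (hW₁ : Measurable W₁) (hY₁ : Measurable Y₁) (hY₂ : Measurable Y₂)
    (h0 : condMutualInfo μ U Y₁ (fun ω => (T ω, W₁ ω)) = condMutualInfo μ U Y₁ W₁)
    (h1 : condMutualInfo μ W₂ Y₁ (fun ω => (T ω, U ω, W₁ ω)) = condMutualInfo μ W₁ Y₂ (fun ω => (T ω, U ω, W₂ ω)))
    (h2 : condMutualInfo μ V Y₂ (fun ω => (T ω, U ω, W₂ ω)) = condMutualInfo μ V Y₂ W₂)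
    : condMutualInfo μ T Y₁ W₁ + condMutualInfo μ U Y₁ W₁ + condMutualInfo μ V Y₂ W₂ ≤ condMutualInfo μ V Y₂ (fun ω => (T ω, U ω, W₁ ω, W₂ ω)) + mutualInfo μ (fun ω => (T ω, W₁ ω, W₂ ω)) Y₁ + condMutualInfo μ U Y₁ (fun ω => (T ω, W₁ ω, W₂ ω)) := by
  have chain : mutualInfo μ (fun ω => (T ω, W₁ ω, W₂ ω)) Y₁ = mutualInfo μ W₁ Y₁ +
      condMutualInfo μ T Y₁ W₁ + condMutualInfo μ W₂ Y₁ (fun ω => (T ω, W₁ ω)) := by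
    rw [add_assoc, ← condMutualInfo_prodMk_left, ← mutualInfo_prodMk_left]
    exact mutualInfo_comp_left μ (f := fun p : SW₁ × ST × SW₂ => (p.2.1, p.1, p.2.2))
      (fun _ _ h => by simp_all [Prod.ext_iff]) (fun ω => (W₁ ω, T ω, W₂ ω)) Y₁
  have swap₁ := condMutualInfo_add_condMutualInfo_comm μ U W₂ Y₁ (fun ω => (T ω, W₁ ω))
  have swap₂ := condMutualInfo_add_condMutualInfo_comm μ V W₁ Y₂ (fun ω => (T ω, U ω, W₂ ω))
  have hTUW₁ : condMutualInfo μ W₂ Y₁ (fun ω => (T ω, U ω, W₁ ω)) =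
      condMutualInfo μ W₂ Y₁ (fun ω => (U ω, T ω, W₁ ω)) :=
    condMutualInfo_comp_cond μ (f := fun p : SU × ST × SW₁ => (p.2.1, p.1, p.2.2))
      (fun _ _ h => by simp_all [Prod.ext_iff]) W₂ Y₁ fun ω => (U ω, T ω, W₁ ω)
  have hTW₁W₂ : condMutualInfo μ U Y₁ (fun ω => (T ω, W₁ ω, W₂ ω)) =
      condMutualInfo μ U Y₁ (fun ω => (W₂ ω, T ω, W₁ ω)) :=
    condMutualInfo_comp_cond μ (f := fun p : SW₂ × ST × SW₁ => (p.2.1, p.2.2, p.1))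
      (fun _ _ h => by simp_all [Prod.ext_iff]) U Y₁ fun ω => (W₂ ω, T ω, W₁ ω)
  have hTUVW₂ : condMutualInfo μ W₁ Y₂ (fun ω => (T ω, U ω, V ω, W₂ ω)) =
      condMutualInfo μ W₁ Y₂ (fun ω => (V ω, T ω, U ω, W₂ ω)) :=
    condMutualInfo_comp_cond μ
      (f := fun p : SV × ST × SU × SW₂ => (p.2.1, p.2.2.1, p.1, p.2.2.2))
      (fun _ _ h => by simp_all [Prod.ext_iff]) W₁ Y₂ fun ω => (V ω, T ω, U ω, W₂ ω)
  have hTUW₁W₂ : condMutualInfo μ V Y₂ (fun ω => (T ω, U ω, W₁ ω, W₂ ω)) =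
      condMutualInfo μ V Y₂ (fun ω => (W₁ ω, T ω, U ω, W₂ ω)) :=
    condMutualInfo_comp_cond μ
      (f := fun p : SW₁ × ST × SU × SW₂ => (p.2.1, p.2.2.1, p.1, p.2.2.2))
      (fun _ _ h => by simp_all [Prod.ext_iff]) V Y₂ fun ω => (W₁ ω, T ω, U ω, W₂ ω)
  have hW₁Y₁ := mutualInfo_nonneg μ hW₁ hY₁
  have hW₁Y₂ := condMutualInfo_nonneg μ hW₁ hY₂ (fun ω => (T ω, U ω, V ω, W₂ ω))
  linarith

theorem stmt_13
    {Ω : Type*} [MeasurableSpace Ω] (μ : Measure Ω) [IsProbabilityMeasure μ]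
    {ST SU SV SW₁ SW₂ SY₁ SY₂ : Type*}
    [Fintype ST] [MeasurableSpace ST] [MeasurableSingletonClass ST] [Fintype SU] [MeasurableSpace SU] [MeasurableSingletonClass SU] [Fintype SV] [MeasurableSpace SV] [MeasurableSingletonClass SV] [Fintype SW₁] [MeasurableSpace SW₁] [MeasurableSingletonClass SW₁] [Fintype SW₂] [MeasurableSpace SW₂] [MeasurableSingletonClass SW₂] [Fintype SY₁] [MeasurableSpace SY₁] [MeasurableSingletonClass SY₁] [Fintype SY₂] [MeasurableSpace SY₂] [MeasurableSingletonClass SY₂]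
    (T : Ω → ST) (U : Ω → SU) (V : Ω → SV) (W₁ : Ω → SW₁) (W₂ : Ω → SW₂) (Y₁ : Ω → SY₁) (Y₂ : Ω → SY₂)
    (hT : Measurable T) (hU : Measurable U) (hV : Measurable V) (hW₁ : Measurable W₁) (hW₂ : Measurable W₂) (hY₁ : Measurable Y₁) (hY₂ : Measurable Y₂)
    (h0 : condMutualInfo μ U Y₁ (fun ω => (T ω, W₁ ω)) = condMutualInfo μ U Y₁ W₁)
    (h1 : condMutualInfo μ W₂ Y₁ (fun ω => (T ω, U ω, W₁ ω)) = condMutualInfo μ W₁ Y₂ (fun ω => (T ω, U ω, W₂ ω)))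
    (h2 : condMutualInfo μ V Y₂ (fun ω => (T ω, U ω, W₂ ω)) = condMutualInfo μ V Y₂ W₂)
    : condMutualInfo μ T Y₁ W₁ + condMutualInfo μ U Y₁ W₁ + condMutualInfo μ V Y₂ W₂ ≤ condMutualInfo μ V Y₂ (fun ω => (T ω, U ω, W₁ ω, W₂ ω)) + mutualInfo μ (fun ω => (T ω, W₁ ω, W₂ ω)) Y₁ + condMutualInfo μ U Y₁ (fun ω => (T ω, W₁ ω, W₂ ω)) :=
  stmt_13_general μ T U V W₁ W₂ Y₁ Y₂ hW₁ hY₁ hY₂ h0 h1 h2
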